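/- arXiv:2502.00591 — 6 statements merged into one kernel-verified Lean document; each statement's English description precedes it below -/
import Mathlib

section
/- Let Q = k[x_1,...,x_n, y_{i,j}, z] be a polynomial ring over a field, let I = (z x_1, ..., z x_n) and let J be generated by monomials of the form x_i y_{i,j} (with at least one generator). Then the ideal quotient (I : J) equals the principal ideal (z). -/
/-- Variables of the polynomial ring `Q = k[z, x_1,…,x_n, y_{i,j}]`. -/
inductive TreeVar (n : ℕ) (a : Fin n → ℕ) : Type
  | z : TreeVar n a
  | x : Fin n → TreeVar n a
  | y : (i : Fin n) → Fin (a i) → TreeVar n a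

open MvPolynomial

/-!
Every generator `x_i y_{i,j}` of `J` is a multiple of some `x_i`, so `z J ⊆ (z x_1, …, z x_n)`.
Conversely `I ⊆ (z)`, and `z` is prime in the polynomial ring while it divides neither
`x_i` nor `y_{i,j}`; so `q x_i y_{i,j} ∈ I` for one generator forces `z ∣ q`.
-/

namespace Ideal

variable {R : Type*} [CommSemiring R]

lemma span_range_mul_le_span_singleton {ι : Type*} (z : R) (u : ι → R) :
    span (Set.range fun i => z * u i) ≤ span {z} := by
  rw [span_le]
  rintro _ ⟨i, rfl⟩
  exact mem_span_singleton.mpr (dvd_mul_right z (u i))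

lemma colon_span_range_mul_eq_span_singleton {ι : Type*} {z : R} (hz : Prime z) (u : ι → R)
    {S : Set R} (hS : ∀ s ∈ S, ∃ i, u i ∣ s) (hS' : ∃ s ∈ S, ¬z ∣ s) :
    (span (Set.range fun i => z * u i)).colon S = span {z} := by
  apply le_antisymm
  · intro q hq
    obtain ⟨s, hs, hzs⟩ := hS'
    have hqs : z ∣ q * s :=
      mem_span_singleton.mp (span_range_mul_le_span_singleton z u (Submodule.mem_colon.mp hq s hs))
    exact mem_span_singleton.mpr ((hz.dvd_or_dvd hqs).resolve_right hzs)
  · rw [span_le, Set.singleton_subset_iff, SetLike.mem_coe, Submodule.mem_colon]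
    intro s hs
    obtain ⟨i, t, rfl⟩ := hS s hs
    rw [smul_eq_mul, ← mul_assoc]
    exact mul_mem_right t _ (subset_span ⟨i, rfl⟩)

end Ideal

theorem stmt0_general {k : Type*} [Field k] (n : ℕ) (a : Fin n → ℕ)
    (hne : ∃ i, 0 < a i)
    (I J : Ideal (MvPolynomial (TreeVar n a) k))
    (hI : I = Ideal.span (Set.range fun i : Fin n =>
      X (TreeVar.z : TreeVar n a) * X (TreeVar.x i)))
    (hJ : J = Ideal.span {p | ∃ (i : Fin n) (j : Fin (a i)),
      p = X (TreeVar.x i : TreeVar n a) * X (TreeVar.y i j)}) :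
    Submodule.colon I J = Ideal.span {X (TreeVar.z : TreeVar n a)} := by
  subst hI hJ
  rw [Ideal.colon_span]
  refine Ideal.colon_span_range_mul_eq_span_singleton X_prime _ ?_ ?_
  · rintro _ ⟨i, j, rfl⟩
    exact ⟨i, dvd_mul_right _ _⟩
  · obtain ⟨i, hi⟩ := hne
    refine ⟨_, ⟨i, ⟨0, hi⟩, rfl⟩, ?_⟩
    simp [X_dvd_mul_iff, X_dvd_X]

/-- with `I = (z x_1, …, z x_n)` and `J = (x_i y_{i,j})` (nonempty),
the ideal quotient `(I : J)` equals `(z)`. -/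
theorem stmt0 {k : Type*} [Field k] (n : ℕ) (hn : 0 < n) (a : Fin n → ℕ)
    (hne : ∃ i, 0 < a i)
    (I J : Ideal (MvPolynomial (TreeVar n a) k))
    (hI : I = Ideal.span (Set.range fun i : Fin n =>
      X (TreeVar.z : TreeVar n a) * X (TreeVar.x i)))
    (hJ : J = Ideal.span {p | ∃ (i : Fin n) (j : Fin (a i)),
      p = X (TreeVar.x i : TreeVar n a) * X (TreeVar.y i j)}) :
    Submodule.colon I J = Ideal.span {X (TreeVar.z : TreeVar n a)} :=
  stmt0_general n a hne I J hI hJ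
end

section
/- With Q, I, J as above (I = (z x_1,...,z x_n), J generated by monomials x_i y_{i,j}), one has I ∩ J = z·J, i.e., the intersection of I and J equals the product of the principal ideal (z) with J. -/
open MvPolynomial

theorem Ideal.inf_eq_span_singleton_mul {R : Type*} [CommSemiring R] {I J : Ideal R} {r : R}
    (hJ : ∀ q, r * q ∈ J → q ∈ J) (hI : I ≤ Ideal.span {r}) (hIJ : Ideal.span {r} * J ≤ I) :
    I ⊓ J = Ideal.span {r} * J := by
  refine le_antisymm ?_ (le_inf hIJ Ideal.mul_le_right)
  rintro p ⟨hpI, hpJ⟩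
  obtain ⟨q, rfl⟩ := Ideal.mem_span_singleton'.1 (hI hpI)
  exact Ideal.mem_span_singleton_mul.2 ⟨q, hJ q (by rwa [mul_comm]), mul_comm _ _⟩

theorem MvPolynomial.mem_span_monomial_of_X_mul_mem {σ R : Type*} [CommSemiring R]
    {S : Set (σ →₀ ℕ)} {v : σ} (hS : ∀ s ∈ S, s v = 0) {q : MvPolynomial σ R}
    (h : X v * q ∈ Ideal.span ((fun s => monomial s (1 : R)) '' S)) :
    q ∈ Ideal.span ((fun s => monomial s (1 : R)) '' S) := by
  rw [mem_ideal_span_monomial_image] at h ⊢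
  intro m hm
  have hvm : Finsupp.single v 1 + m ∈ (X v * q).support := by
    rwa [mem_support_iff, coeff_X_mul, ← mem_support_iff]
  obtain ⟨s, hs, hle⟩ := h _ hvm
  refine ⟨s, hs, fun w => ?_⟩
  by_cases hw : w = v
  · subst hw
    simp [hS s hs]
  · simpa [Finsupp.single_apply, Ne.symm hw] using hle w

theorem MvPolynomial.X_mul_X_eq_monomial {σ R : Type*} [CommSemiring R] (u w : σ) :
    (X u * X w : MvPolynomial σ R) = monomial (Finsupp.single u 1 + Finsupp.single w 1) 1 := by
  rw [X, X, monomial_mul, one_mul]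

theorem stmt1_general {k : Type*} [Field k] (n : ℕ) (a : Fin n → ℕ)
    (I J : Ideal (MvPolynomial (TreeVar n a) k))
    (hI : I = Ideal.span (Set.range fun i : Fin n =>
      X (TreeVar.z : TreeVar n a) * X (TreeVar.x i)))
    (hJ : J = Ideal.span {p | ∃ (i : Fin n) (j : Fin (a i)),
      p = X (TreeVar.x i : TreeVar n a) * X (TreeVar.y i j)}) :
    I ⊓ J = Ideal.span {X (TreeVar.z : TreeVar n a)} * J := by
  have hJ_monomial : J = Ideal.span ((fun s => monomial s (1 : k)) ''
      {s | ∃ (i : Fin n) (j : Fin (a i)),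
        s = Finsupp.single (TreeVar.x i) 1 + Finsupp.single (TreeVar.y i j) 1}) := by
    rw [hJ]
    congr 1
    ext p
    constructor
    · rintro ⟨i, j, rfl⟩
      exact ⟨_, ⟨i, j, rfl⟩, (X_mul_X_eq_monomial _ _).symm⟩
    · rintro ⟨_, ⟨i, j, rfl⟩, rfl⟩
      exact ⟨i, j, (X_mul_X_eq_monomial _ _).symm⟩
  refine Ideal.inf_eq_span_singleton_mul (fun q hq => ?_) ?_ ?_
  · rw [hJ_monomial] at hq ⊢
    refine mem_span_monomial_of_X_mul_mem ?_ hq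
    rintro _ ⟨i, j, rfl⟩
    simp
  · rw [hI, Ideal.span_le]
    rintro _ ⟨i, rfl⟩
    exact Ideal.mem_span_singleton'.2 ⟨X (TreeVar.x i), mul_comm _ _⟩
  · rw [hJ, Ideal.span_mul_span', Ideal.span_le]
    rintro _ ⟨_, rfl, _, ⟨i, j, rfl⟩, rfl⟩
    dsimp only
    rw [hI, ← mul_assoc]
    exact Ideal.mul_mem_right _ _ (Ideal.subset_span ⟨i, rfl⟩)

/-- with `I = (z x_1, …, z x_n)` and `J = (x_i y_{i,j})`,
one has `I ∩ J = z·J`. -/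
theorem stmt1 {k : Type*} [Field k] (n : ℕ) (hn : 0 < n) (a : Fin n → ℕ)
    (I J : Ideal (MvPolynomial (TreeVar n a) k))
    (hI : I = Ideal.span (Set.range fun i : Fin n =>
      X (TreeVar.z : TreeVar n a) * X (TreeVar.x i)))
    (hJ : J = Ideal.span {p | ∃ (i : Fin n) (j : Fin (a i)),
      p = X (TreeVar.x i : TreeVar n a) * X (TreeVar.y i j)}) :
    I ⊓ J = Ideal.span {X (TreeVar.z : TreeVar n a)} * J :=
  stmt1_general n a I J hI hJ
end

section
/- With Q, I, J as above, there is an isomorphism of Q-modules (I + J)/I ≅ J/(zJ). -/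
open MvPolynomial

theorem Submodule.nonempty_sup_quotient_equiv_of_inf_eq {R M : Type*} [Ring R] [AddCommGroup M]
    [Module R M] {p q r : Submodule R M} (h : q ⊓ p = r) :
    Nonempty ((↥(p ⊔ q) ⧸ p.comap (p ⊔ q).subtype) ≃ₗ[R] (↥q ⧸ r.comap q.subtype)) := by
  subst h
  rw [sup_comm]
  exact ⟨(LinearMap.quotientInfEquivSupQuotient q p).symm⟩

namespace MvPolynomial

variable {σ R : Type*} [CommSemiring R]

theorem X_mul_X_eq_monomial_s2 (i j : σ) :
    (X i * X j : MvPolynomial σ R) = monomial (Finsupp.single i 1 + Finsupp.single j 1) 1 := by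
  rw [X, X, monomial_mul, one_mul]

theorem span_monomial_inf_le {S T U : Set (σ →₀ ℕ)}
    (h : ∀ s ∈ S, ∀ t ∈ T, ∃ u ∈ U, u ≤ s ⊔ t) :
    Ideal.span ((monomial · (1 : R)) '' S) ⊓ Ideal.span ((monomial · 1) '' T) ≤
      Ideal.span ((monomial · 1) '' U) := by
  intro f ⟨hfS, hfT⟩
  rw [SetLike.mem_coe, mem_ideal_span_monomial_image] at hfS hfT
  rw [mem_ideal_span_monomial_image]
  intro m hm
  obtain ⟨s, hs, hsm⟩ := hfS m hm
  obtain ⟨t, ht, htm⟩ := hfT m hm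
  obtain ⟨u, hu, hust⟩ := h s hs t ht
  exact ⟨u, hu, hust.trans (sup_le hsm htm)⟩

end MvPolynomial

namespace TreeVar

open Finsupp

variable (k : Type*) [CommSemiring k] (n : ℕ) (a : Fin n → ℕ)

noncomputable def zxIdeal : Ideal (MvPolynomial (TreeVar n a) k) :=
  Ideal.span (Set.range fun i : Fin n => X z * X (x i))

noncomputable def xyIdeal : Ideal (MvPolynomial (TreeVar n a) k) :=
  Ideal.span {p | ∃ (i : Fin n) (j : Fin (a i)), p = X (x i) * X (y i j)}

theorem zxIdeal_eq_span_monomial : zxIdeal k n a =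
    Ideal.span ((monomial · 1) '' Set.range fun i : Fin n => single z 1 + single (x i) 1) := by
  rw [zxIdeal, ← Set.range_comp]
  simp [Function.comp_def, X_mul_X_eq_monomial_s2]

theorem xyIdeal_eq_span_monomial : xyIdeal k n a = Ideal.span ((monomial · 1) ''
    {s | ∃ (i : Fin n) (j : Fin (a i)), s = single (x i) 1 + single (y i j) 1}) := by
  rw [xyIdeal]
  congr 1
  ext p
  simp [X_mul_X_eq_monomial_s2, eq_comm]

theorem xyIdeal_le_span_X_x :
    xyIdeal k n a ≤ Ideal.span (Set.range fun i : Fin n => X (x i)) := by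
  rw [xyIdeal, Ideal.span_le]
  rintro _ ⟨i, j, rfl⟩
  exact Ideal.mul_mem_right _ _ (Ideal.subset_span ⟨i, rfl⟩)

theorem span_X_z_mul_span_X_x :
    Ideal.span {X z} * Ideal.span (Set.range fun i : Fin n => X (x i)) = zxIdeal k n a := by
  rw [Ideal.span_mul_span', Set.singleton_mul, ← Set.range_comp]
  rfl

theorem xyIdeal_inf_zxIdeal :
    xyIdeal k n a ⊓ zxIdeal k n a = Ideal.span {X z} * xyIdeal k n a := by
  refine le_antisymm ?_ (le_inf Ideal.mul_le_right ?_)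
  · calc xyIdeal k n a ⊓ zxIdeal k n a
        ≤ Ideal.span ((monomial · 1) '' {s | ∃ (i : Fin n) (j : Fin (a i)),
            s = single z 1 + (single (x i) 1 + single (y i j) 1)}) := by
          rw [xyIdeal_eq_span_monomial, zxIdeal_eq_span_monomial]
          refine span_monomial_inf_le ?_
          rintro _ ⟨i, j, rfl⟩ _ ⟨i', rfl⟩
          refine ⟨_, ⟨i, j, rfl⟩, fun v => ?_⟩
          cases v <;> simp
      _ ≤ Ideal.span {X z} * xyIdeal k n a := by
          rw [Ideal.span_le]
          rintro _ ⟨_, ⟨i, j, rfl⟩, rfl⟩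
          dsimp only [SetLike.mem_coe]
          rw [monomial_single_add, pow_one, ← X_mul_X_eq_monomial_s2]
          exact Ideal.mul_mem_mul (Ideal.mem_span_singleton_self _) (Ideal.subset_span ⟨i, j, rfl⟩)
  · rw [← span_X_z_mul_span_X_x]
    exact Ideal.mul_mono_right (xyIdeal_le_span_X_x k n a)

end TreeVar

theorem stmt2_general {k : Type*} [Field k] (n : ℕ) (a : Fin n → ℕ)
    (I J : Ideal (MvPolynomial (TreeVar n a) k))
    (hI : I = Ideal.span (Set.range fun i : Fin n =>
      X (TreeVar.z : TreeVar n a) * X (TreeVar.x i)))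
    (hJ : J = Ideal.span {p | ∃ (i : Fin n) (j : Fin (a i)),
      p = X (TreeVar.x i : TreeVar n a) * X (TreeVar.y i j)}) :
    Nonempty (
      (↥(I ⊔ J) ⧸ (Submodule.comap (Submodule.subtype (I ⊔ J)) I))
        ≃ₗ[MvPolynomial (TreeVar n a) k]
      (↥J ⧸ (Submodule.comap (Submodule.subtype J)
        (Ideal.span {X (TreeVar.z : TreeVar n a)} * J)))) := by
  subst hI hJ
  exact Submodule.nonempty_sup_quotient_equiv_of_inf_eq (TreeVar.xyIdeal_inf_zxIdeal k n a)

/-- with `I = (z x_1, …, z x_n)` and `J = (x_i y_{i,j})`,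
there is a `Q`-module isomorphism `(I + J)/I ≅ J/(zJ)`. -/
theorem stmt2 {k : Type*} [Field k] (n : ℕ) (hn : 0 < n) (a : Fin n → ℕ)
    (I J : Ideal (MvPolynomial (TreeVar n a) k))
    (hI : I = Ideal.span (Set.range fun i : Fin n =>
      X (TreeVar.z : TreeVar n a) * X (TreeVar.x i)))
    (hJ : J = Ideal.span {p | ∃ (i : Fin n) (j : Fin (a i)),
      p = X (TreeVar.x i : TreeVar n a) * X (TreeVar.y i j)}) :
    Nonempty (
      (↥(I ⊔ J) ⧸ (Submodule.comap (Submodule.subtype (I ⊔ J)) I))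
        ≃ₗ[MvPolynomial (TreeVar n a) k]
      (↥J ⧸ (Submodule.comap (Submodule.subtype J)
        (Ideal.span {X (TreeVar.z : TreeVar n a)} * J)))) :=
  stmt2_general n a I J hI hJ
end

section
/- For finite pairwise disjoint subsets U, V, W of a totally ordered set, σ(U ∪ V, W) = σ(U,W) + σ(V,W) and σ(U, V ∪ W) = σ(U,V) + σ(U,W); consequently the Taylor product is associative on basis elements: (e_U · e_V) · e_W = e_U · (e_V · e_W). -/
open Finset

/-- `σ(V,W) = |{(v,w) ∈ V × W : v > w}|`. -/
def sigmaCount {ι : Type*} [LinearOrder ι] (V W : Finset ι) : ℕ :=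
  ((V ×ˢ W).filter fun p => p.2 < p.1).card

/-- The Taylor (Gemeda) product of basis elements of the Taylor complex. -/
noncomputable def taylorMul (k : Type*) [Field k] {ι σ₀ : Type*} [LinearOrder ι]
    (u : ι → (σ₀ →₀ ℕ)) (V W : Finset ι) :
    Finset ι →₀ MvPolynomial σ₀ k :=
  if Disjoint V W then
    Finsupp.single (V ∪ W)
      ((-1 : MvPolynomial σ₀ k) ^ sigmaCount V W *
        MvPolynomial.monomial (V.sup u + W.sup u - (V ∪ W).sup u) 1)
  else 0

/-- Bilinear extension of the Taylor product to the whole Taylor complex. -/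
noncomputable def taylorProd (k : Type*) [Field k] {ι σ₀ : Type*} [LinearOrder ι]
    (u : ι → (σ₀ →₀ ℕ)) (x y : Finset ι →₀ MvPolynomial σ₀ k) :
    Finset ι →₀ MvPolynomial σ₀ k :=
  x.sum fun V cV => y.sum fun W cW => (cV * cW) • taylorMul k u V W

lemma sigma_union_left {ι : Type*} [LinearOrder ι] (U V W : Finset ι)
    (hUV : Disjoint U V) :
    sigmaCount (U ∪ V) W = sigmaCount U W + sigmaCount V W := by
  unfold sigmaCount
  rw [union_product, filter_union, card_union_of_disjoint]
  exact disjoint_filter_filter (disjoint_product.2 (Or.inl hUV))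

lemma sigma_union_right {ι : Type*} [LinearOrder ι] (U V W : Finset ι)
    (hVW : Disjoint V W) :
    sigmaCount U (V ∪ W) = sigmaCount U V + sigmaCount U W := by
  unfold sigmaCount
  rw [product_union, filter_union, card_union_of_disjoint]
  exact disjoint_filter_filter (disjoint_product.2 (Or.inr hVW))

lemma taylorProd_single (k : Type*) [Field k] {ι σ₀ : Type*} [LinearOrder ι]
    (u : ι → (σ₀ →₀ ℕ)) (A B : Finset ι) (a b : MvPolynomial σ₀ k) :
    taylorProd k u (Finsupp.single A a) (Finsupp.single B b)
      = (a * b) • taylorMul k u A B := by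
  unfold taylorProd
  rw [Finsupp.sum_single_index (by simp), Finsupp.sum_single_index (by simp)]

/-- for pairwise disjoint `U, V, W`, `σ(U∪V, W) = σ(U,W) + σ(V,W)` and
`σ(U, V∪W) = σ(U,V) + σ(U,W)`; consequently the Taylor product is associative on
basis elements: `(e_U · e_V) · e_W = e_U · (e_V · e_W)`. -/
theorem stmt9 (k : Type*) [Field k] {ι σ₀ : Type*} [LinearOrder ι]
    (u : ι → (σ₀ →₀ ℕ)) (U V W : Finset ι)
    (hUV : Disjoint U V) (hUW : Disjoint U W) (hVW : Disjoint V W) :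
    sigmaCount (U ∪ V) W = sigmaCount U W + sigmaCount V W ∧
    sigmaCount U (V ∪ W) = sigmaCount U V + sigmaCount U W ∧
    taylorProd k u (taylorMul k u U V) (Finsupp.single W 1) =
      taylorProd k u (Finsupp.single U 1) (taylorMul k u V W) := by
  have hUVW : Disjoint (U ∪ V) W := disjoint_union_left.2 ⟨hUW, hVW⟩
  have hU_VW : Disjoint U (V ∪ W) := disjoint_union_right.2 ⟨hUV, hUW⟩
  refine ⟨sigma_union_left U V W hUV, sigma_union_right U V W hVW, ?_⟩
  rw [taylorMul, if_pos hUV, taylorMul, if_pos hVW,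
    taylorProd_single, taylorProd_single, taylorMul, if_pos hUVW,
    taylorMul, if_pos hU_VW, Finsupp.smul_single, Finsupp.smul_single,
    union_assoc]
  congr 1
  rw [smul_eq_mul, smul_eq_mul, mul_one, one_mul]
  have hsign : sigmaCount U V + sigmaCount (U ∪ V) W
      = sigmaCount V W + sigmaCount U (V ∪ W) := by
    rw [sigma_union_left U V W hUV, sigma_union_right U V W hVW]; ring
  have hmon : (U.sup u + V.sup u - (U ∪ V).sup u) + ((U ∪ V).sup u + W.sup u - (U ∪ (V ∪ W)).sup u)
      = (V.sup u + W.sup u - (V ∪ W).sup u) + (U.sup u + (V ∪ W).sup u - (U ∪ (V ∪ W)).sup u) := by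
    ext a
    simp only [Finsupp.add_apply, Finsupp.tsub_apply, Finset.sup_union, Finsupp.sup_apply,
      union_assoc]
    have h1 : ((U.sup u) ⊔ (V.sup u)) a = max (U.sup u a) (V.sup u a) := rfl
    omega
  have e1 : ∀ (n m : ℕ) (s t : σ₀ →₀ ℕ),
      ((-1 : MvPolynomial σ₀ k) ^ n * MvPolynomial.monomial s 1) *
        ((-1) ^ m * MvPolynomial.monomial t 1)
      = (-1) ^ (n + m) * MvPolynomial.monomial (s + t) 1 := by
    intros n m s t
    rw [mul_mul_mul_comm, MvPolynomial.monomial_mul, pow_add, mul_one]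
  rw [e1, e1, hsign, hmon]
end

section
/- Let T be the Taylor dg algebra of a squarefree monomial ideal I and let x_k be a variable. Let I_k be the Q-span of {e_U : some u ∈ U is divisible by x_k} together with {∂(e_U) : some u ∈ U divisible by x_k}. Then I_k is a dg ideal of T: it is closed under the differential and under multiplication by arbitrary elements of T. -/
open Finset

/-- The Taylor differential on a basis element:
`∂(e_U) = Σ_{v∈U} (−1)^{σ(v,U)} (m_U / m_{U∖v}) e_{U∖v}`. -/
noncomputable def taylorD (k : Type*) [Field k] {ι σ₀ : Type*} [LinearOrder ι]
    (u : ι → (σ₀ →₀ ℕ)) (U : Finset ι) :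
    Finset ι →₀ MvPolynomial σ₀ k :=
  ∑ v ∈ U,
    ((-1 : MvPolynomial σ₀ k) ^ ((U.filter fun w => w < v).card)) •
      Finsupp.single (U.erase v)
        (MvPolynomial.monomial (U.sup u - (U.erase v).sup u) 1)

/-- Linear extension of the Taylor differential to the whole Taylor complex. -/
noncomputable def taylorDiff (k : Type*) [Field k] {ι σ₀ : Type*} [LinearOrder ι]
    (u : ι → (σ₀ →₀ ℕ)) (x : Finset ι →₀ MvPolynomial σ₀ k) :
    Finset ι →₀ MvPolynomial σ₀ k :=
  x.sum fun U c => c • taylorD k u U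

/-!
A basis element `e_Y` lies in `I_κ` whenever `Y` contains a generator divisible by `x_κ`. If it
does not, but `u_w` is divisible by `x_κ`, then `p e_Y ∈ I_κ` for every `p` divisible by
`m_{Y ∪ w} / m_Y`: up to sign, `(m_{Y ∪ w} / m_Y) e_Y` is the `w`-term of `∂(e_{Y ∪ w})`, and all
other terms contain `u_w`. A term of `e_V ∂(e_U)`, `∂(e_U) e_V` or `∂∂(e_U)` on a set `Y` that has
lost the `x_κ`-generator `u_w` of `U` has a coefficient divisible by `m_U / m_{U ∖ w}`
(resp. `m_U / m_Y`), hence by `m_{Y ∪ w} / m_Y`, since `Y ↦ m_{Y ∪ w} / m_Y` is antitone.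
As `∂` and the product are linear, it suffices to check generators.
-/

namespace TaylorComplex

lemma apply_mem_span_of_forall_mem {R M : Type*} [Semiring R] [AddCommMonoid M] [Module R M]
    (f : M →ₗ[R] M) {s : Set M} (h : ∀ z ∈ s, f z ∈ Submodule.span R s) {x : M}
    (hx : x ∈ Submodule.span R s) : f x ∈ Submodule.span R s :=
  (Submodule.map_span_le f s _).mpr h ⟨x, hx, rfl⟩

section SupArith

variable {ι σ : Type*}

lemma finset_sup_apply (s : Finset ι) (f : ι → σ →₀ ℕ) (i : σ) :
    s.sup f i = s.sup fun j => f j i :=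
  Finset.apply_sup_eq_sup_comp (fun g : σ →₀ ℕ => g i) (fun _ _ => rfl) rfl

lemma sup_insert_sub_sup_le [DecidableEq ι] {s t : Finset ι} (hst : s ⊆ t) (f : ι → σ →₀ ℕ)
    (w : ι) : (insert w t).sup f - t.sup f ≤ (insert w s).sup f - s.sup f := by
  intro i
  have := Finset.sup_mono (f := fun j => f j i) hst
  simp only [Finsupp.tsub_apply, finset_sup_apply, sup_insert, Finsupp.sup_apply]
  omega

end SupArith

variable (k : Type*) [Field k] {ι σ₀ : Type*} [LinearOrder ι] (u : ι → (σ₀ →₀ ℕ))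

lemma taylorDiff_eq_linearCombination :
    taylorDiff k u = Finsupp.linearCombination (MvPolynomial σ₀ k) (taylorD k u) :=
  rfl

noncomputable def taylorProdBilin :
    (Finset ι →₀ MvPolynomial σ₀ k) →ₗ[MvPolynomial σ₀ k]
      (Finset ι →₀ MvPolynomial σ₀ k) →ₗ[MvPolynomial σ₀ k] (Finset ι →₀ MvPolynomial σ₀ k) :=
  Finsupp.linearCombination _ fun V => Finsupp.linearCombination _ (taylorMul k u V)

lemma taylorProdBilin_apply (x y : Finset ι →₀ MvPolynomial σ₀ k) :
    taylorProdBilin k u x y = taylorProd k u x y := by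
  simp only [taylorProdBilin, taylorProd, Finsupp.linearCombination_apply,
    LinearMap.finsupp_sum_apply, LinearMap.smul_apply, Finsupp.smul_sum, smul_smul]

variable (κ : σ₀)

noncomputable def taylorIdealOfVar :
    Submodule (MvPolynomial σ₀ k) (Finset ι →₀ MvPolynomial σ₀ k) :=
  Submodule.span _
    (((fun U => Finsupp.single U (1 : MvPolynomial σ₀ k)) '' {U | ∃ j ∈ U, u j κ ≠ 0}) ∪
      (taylorD k u '' {U | ∃ j ∈ U, u j κ ≠ 0}))

variable {k u κ}

lemma single_mem_taylorIdealOfVar {W : Finset ι} (hW : ∃ j ∈ W, u j κ ≠ 0)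
    (p : MvPolynomial σ₀ k) : Finsupp.single W p ∈ taylorIdealOfVar k u κ := by
  have h := Submodule.smul_mem (taylorIdealOfVar k u κ) p
    (Submodule.subset_span (Or.inl ⟨W, hW, rfl⟩))
  rwa [Finsupp.smul_single', mul_one] at h

lemma taylorD_mem_taylorIdealOfVar {U : Finset ι} (hU : ∃ j ∈ U, u j κ ≠ 0) :
    taylorD k u U ∈ taylorIdealOfVar k u κ :=
  Submodule.subset_span (Or.inr ⟨U, hU, rfl⟩)

lemma single_erase_monomial_mem {X : Finset ι} {w : ι} (hwX : w ∈ X) (hw : u w κ ≠ 0) :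
    Finsupp.single (X.erase w) (MvPolynomial.monomial (X.sup u - (X.erase w).sup u) 1)
      ∈ taylorIdealOfVar k u κ := by
  set f : ι → (Finset ι →₀ MvPolynomial σ₀ k) := fun v =>
    (-1 : MvPolynomial σ₀ k) ^ (X.filter fun x => x < v).card •
      Finsupp.single (X.erase v) (MvPolynomial.monomial (X.sup u - (X.erase v).sup u) 1)
  have hrest : ∑ v ∈ X.erase w, f v ∈ taylorIdealOfVar k u κ :=
    Submodule.sum_mem _ fun v hv => Submodule.smul_mem _ _ <| single_mem_taylorIdealOfVar
      ⟨w, Finset.mem_erase.mpr ⟨(Finset.ne_of_mem_erase hv).symm, hwX⟩, hw⟩ _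
  have hfw : f w ∈ taylorIdealOfVar k u κ := by
    have hX : ∑ v ∈ X.erase w, f v + f w ∈ taylorIdealOfVar k u κ := by
      rw [Finset.sum_erase_add X f hwX]
      exact taylorD_mem_taylorIdealOfVar ⟨w, hwX, hw⟩
    exact (Submodule.add_mem_iff_right _ hrest).mp hX
  exact (Submodule.smul_mem_iff_of_isUnit _ (isUnit_one.neg.pow _)).mp hfw

lemma single_mem_of_monomial_dvd {Y : Finset ι} {w : ι} (hw : u w κ ≠ 0) {p : MvPolynomial σ₀ k}
    (hp : MvPolynomial.monomial ((insert w Y).sup u - Y.sup u) 1 ∣ p) :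
    Finsupp.single Y p ∈ taylorIdealOfVar k u κ := by
  by_cases hwY : w ∈ Y
  · exact single_mem_taylorIdealOfVar ⟨w, hwY, hw⟩ p
  obtain ⟨q, rfl⟩ := hp
  have h := Submodule.smul_mem _ q
    (single_erase_monomial_mem (X := insert w Y) (Finset.mem_insert_self w Y) hw)
  rwa [Finset.erase_insert hwY, Finsupp.smul_single', mul_comm] at h

lemma exists_mem_erase_of_eq_zero {U : Finset ι} (hU : ∃ j ∈ U, u j κ ≠ 0) {w : ι}
    (hw : u w κ = 0) : ∃ j ∈ U.erase w, u j κ ≠ 0 := by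
  obtain ⟨j, hjU, hj⟩ := hU
  exact ⟨j, Finset.mem_erase.mpr ⟨fun h => hj (h ▸ hw), hjU⟩, hj⟩

lemma single_mem_of_erase_subset {U Y : Finset ι} (hU : ∃ j ∈ U, u j κ ≠ 0) {w : ι} (hwU : w ∈ U)
    (hY : U.erase w ⊆ Y) {p : MvPolynomial σ₀ k}
    (hp : MvPolynomial.monomial (U.sup u - (U.erase w).sup u) 1 ∣ p) :
    Finsupp.single Y p ∈ taylorIdealOfVar k u κ := by
  by_cases hw : u w κ = 0
  · obtain ⟨j, hj, hjκ⟩ := exists_mem_erase_of_eq_zero hU hw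
    exact single_mem_taylorIdealOfVar ⟨j, hY hj, hjκ⟩ p
  refine single_mem_of_monomial_dvd hw (dvd_trans ?_ hp)
  have hle := sup_insert_sub_sup_le hY u w
  rw [Finset.insert_erase hwU] at hle
  exact MvPolynomial.monomial_dvd_monomial.mpr ⟨Or.inr hle, dvd_rfl⟩

lemma smul_taylorMul_mem {c : MvPolynomial σ₀ k} {V W : Finset ι}
    (h : ∀ p, c ∣ p → Finsupp.single (V ∪ W) p ∈ taylorIdealOfVar k u κ) :
    c • taylorMul k u V W ∈ taylorIdealOfVar k u κ := by
  unfold taylorMul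
  split_ifs
  · rw [Finsupp.smul_single']
    exact h _ (dvd_mul_right _ _)
  · rw [smul_zero]
    exact Submodule.zero_mem _

lemma monomial_smul_taylorD_erase_mem {U : Finset ι} {w : ι} (hwU : w ∈ U) (hw : u w κ ≠ 0) :
    MvPolynomial.monomial (U.sup u - (U.erase w).sup u) (1 : k) • taylorD k u (U.erase w)
      ∈ taylorIdealOfVar k u κ := by
  rw [taylorD, Finset.smul_sum]
  refine Submodule.sum_mem _ fun t _ => ?_
  rw [smul_comm, Finsupp.smul_single']
  refine Submodule.smul_mem _ _ (single_mem_of_monomial_dvd hw ?_)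
  rw [MvPolynomial.monomial_mul, one_mul, tsub_add_tsub_cancel
    (Finset.sup_mono (Finset.erase_subset _ _)) (Finset.sup_mono (Finset.erase_subset _ _))]
  have hsub : insert w ((U.erase w).erase t) ⊆ U :=
    Finset.insert_subset hwU ((Finset.erase_subset _ _).trans (Finset.erase_subset _ _))
  exact MvPolynomial.monomial_dvd_monomial.mpr
    ⟨Or.inr (tsub_le_tsub_right (Finset.sup_mono hsub) _), dvd_rfl⟩

lemma taylorDiff_taylorD_mem {U : Finset ι} (hU : ∃ j ∈ U, u j κ ≠ 0) :
    taylorDiff k u (taylorD k u U) ∈ taylorIdealOfVar k u κ := by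
  rw [taylorDiff_eq_linearCombination, taylorD, map_sum]
  refine Submodule.sum_mem _ fun w hwU => ?_
  rw [map_smul, Finsupp.linearCombination_single]
  refine Submodule.smul_mem _ _ ?_
  by_cases hw : u w κ = 0
  · exact Submodule.smul_mem _ _ (taylorD_mem_taylorIdealOfVar (exists_mem_erase_of_eq_zero hU hw))
  · exact monomial_smul_taylorD_erase_mem hwU hw

lemma taylorProd_single_left (V : Finset ι) (d : MvPolynomial σ₀ k)
    (y : Finset ι →₀ MvPolynomial σ₀ k) :
    taylorProd k u (Finsupp.single V d) y = y.sum fun W c => (d * c) • taylorMul k u V W :=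
  Finsupp.sum_single_index (by simp)

lemma taylorProd_single_right (x : Finset ι →₀ MvPolynomial σ₀ k) (W : Finset ι)
    (d : MvPolynomial σ₀ k) :
    taylorProd k u x (Finsupp.single W d) = x.sum fun V c => (c * d) • taylorMul k u V W :=
  Finsupp.sum_congr fun _ _ => Finsupp.sum_single_index (by simp)

lemma taylorProd_single_mem (x : Finset ι →₀ MvPolynomial σ₀ k) {W : Finset ι}
    (hW : ∃ j ∈ W, u j κ ≠ 0) :
    taylorProd k u x (Finsupp.single W 1) ∈ taylorIdealOfVar k u κ ∧
      taylorProd k u (Finsupp.single W 1) x ∈ taylorIdealOfVar k u κ := by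
  obtain ⟨j, hj, hjκ⟩ := hW
  rw [taylorProd_single_left, taylorProd_single_right]
  exact ⟨Submodule.finsuppSum_mem _ _ _ _ fun V _ => smul_taylorMul_mem fun p _ =>
      single_mem_taylorIdealOfVar ⟨j, Finset.mem_union_right V hj, hjκ⟩ p,
    Submodule.finsuppSum_mem _ _ _ _ fun V _ => smul_taylorMul_mem fun p _ =>
      single_mem_taylorIdealOfVar ⟨j, Finset.mem_union_left V hj, hjκ⟩ p⟩

lemma taylorProd_taylorD_mem (x : Finset ι →₀ MvPolynomial σ₀ k) {U : Finset ι}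
    (hU : ∃ j ∈ U, u j κ ≠ 0) :
    taylorProd k u x (taylorD k u U) ∈ taylorIdealOfVar k u κ ∧
      taylorProd k u (taylorD k u U) x ∈ taylorIdealOfVar k u κ := by
  simp only [← taylorProdBilin_apply, taylorD, map_sum, LinearMap.sum_apply, map_smul,
    LinearMap.smul_apply]
  refine ⟨Submodule.sum_mem _ fun w hwU => ?_, Submodule.sum_mem _ fun w hwU => ?_⟩
  · rw [taylorProdBilin_apply, taylorProd_single_right]
    refine Submodule.smul_mem _ _ (Submodule.finsuppSum_mem _ _ _ _ fun V _ => ?_)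
    exact smul_taylorMul_mem fun p hp => single_mem_of_erase_subset hU hwU
      Finset.subset_union_right (dvd_trans (dvd_mul_left _ _) hp)
  · rw [taylorProdBilin_apply, taylorProd_single_left]
    refine Submodule.smul_mem _ _ (Submodule.finsuppSum_mem _ _ _ _ fun W _ => ?_)
    exact smul_taylorMul_mem fun p hp => single_mem_of_erase_subset hU hwU
      Finset.subset_union_left (dvd_trans (dvd_mul_right _ _) hp)

lemma taylorDiff_mem {x : Finset ι →₀ MvPolynomial σ₀ k} (hx : x ∈ taylorIdealOfVar k u κ) :
    taylorDiff k u x ∈ taylorIdealOfVar k u κ := by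
  rw [taylorDiff_eq_linearCombination]
  refine apply_mem_span_of_forall_mem (Finsupp.linearCombination _ (taylorD k u)) ?_ hx
  rintro _ (⟨U, hU, rfl⟩ | ⟨U, hU, rfl⟩)
  · rw [Finsupp.linearCombination_single, one_smul]
    exact taylorD_mem_taylorIdealOfVar hU
  · rw [← taylorDiff_eq_linearCombination]
    exact taylorDiff_taylorD_mem hU

lemma taylorProd_mem_right (x : Finset ι →₀ MvPolynomial σ₀ k) {y : Finset ι →₀ MvPolynomial σ₀ k}
    (hy : y ∈ taylorIdealOfVar k u κ) : taylorProd k u x y ∈ taylorIdealOfVar k u κ := by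
  rw [← taylorProdBilin_apply]
  refine apply_mem_span_of_forall_mem (taylorProdBilin k u x) ?_ hy
  rintro _ (⟨W, hW, rfl⟩ | ⟨U, hU, rfl⟩) <;> rw [taylorProdBilin_apply]
  exacts [(taylorProd_single_mem x hW).1, (taylorProd_taylorD_mem x hU).1]

lemma taylorProd_mem_left {y : Finset ι →₀ MvPolynomial σ₀ k} (hy : y ∈ taylorIdealOfVar k u κ)
    (x : Finset ι →₀ MvPolynomial σ₀ k) : taylorProd k u y x ∈ taylorIdealOfVar k u κ := by
  rw [← taylorProdBilin_apply]
  refine apply_mem_span_of_forall_mem ((taylorProdBilin k u).flip x) ?_ hy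
  rintro _ (⟨W, hW, rfl⟩ | ⟨U, hU, rfl⟩) <;> rw [LinearMap.flip_apply, taylorProdBilin_apply]
  exacts [(taylorProd_single_mem x hW).2, (taylorProd_taylorD_mem x hU).2]

end TaylorComplex

theorem stmt11_general (k : Type*) [Field k] {ι σ₀ : Type*} [LinearOrder ι]
    (u : ι → (σ₀ →₀ ℕ)) (κ : σ₀)
    (Ik : Submodule (MvPolynomial σ₀ k) (Finset ι →₀ MvPolynomial σ₀ k))
    (hIk : Ik = Submodule.span (MvPolynomial σ₀ k)
      (((fun U => Finsupp.single U (1 : MvPolynomial σ₀ k)) ''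
          {U : Finset ι | ∃ j ∈ U, u j κ ≠ 0}) ∪
        ((taylorD k u) '' {U : Finset ι | ∃ j ∈ U, u j κ ≠ 0}))) :
    (∀ x ∈ Ik, taylorDiff k u x ∈ Ik) ∧
    (∀ x y : Finset ι →₀ MvPolynomial σ₀ k, y ∈ Ik →
      taylorProd k u x y ∈ Ik ∧ taylorProd k u y x ∈ Ik) := by
  change Ik = TaylorComplex.taylorIdealOfVar k u κ at hIk
  subst hIk
  exact ⟨fun x hx => TaylorComplex.taylorDiff_mem hx, fun x y hy =>
    ⟨TaylorComplex.taylorProd_mem_right x hy, TaylorComplex.taylorProd_mem_left hy x⟩⟩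

/-- for a squarefree monomial ideal with (distinct) generators
`u j` and a variable `x_κ`, the span `I_κ` of the basis elements `e_U` with some
generator in `U` divisible by `x_κ`, together with their differentials `∂(e_U)`,
is a dg ideal of the Taylor dg algebra: it is closed under the differential and
under multiplication by arbitrary elements. -/
theorem stmt11 (k : Type*) [Field k] {ι σ₀ : Type*} [LinearOrder ι] [Fintype ι]
    (u : ι → (σ₀ →₀ ℕ)) (hu : Function.Injective u)
    (hsf : ∀ j i, u j i ≤ 1) (κ : σ₀)
    (Ik : Submodule (MvPolynomial σ₀ k) (Finset ι →₀ MvPolynomial σ₀ k))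
    (hIk : Ik = Submodule.span (MvPolynomial σ₀ k)
      (((fun U => Finsupp.single U (1 : MvPolynomial σ₀ k)) ''
          {U : Finset ι | ∃ j ∈ U, u j κ ≠ 0}) ∪
        ((taylorD k u) '' {U : Finset ι | ∃ j ∈ U, u j κ ≠ 0}))) :
    (∀ x ∈ Ik, taylorDiff k u x ∈ Ik) ∧
    (∀ x y : Finset ι →₀ MvPolynomial σ₀ k, y ∈ Ik →
      taylorProd k u x y ∈ Ik ∧ taylorProd k u y x ∈ Ik) :=
  stmt11_general k u κ Ik hIk
end

section
/- Let A be a Morse matching on the Taylor graph of a monomial ideal I such that the set A_+ of sources is closed under taking supersets (within subsets of G(I)). Then the induced subcomplex J = ⊕_{V ∈ A_+} (0 → Q e_V → Q ∂(e_V) → 0) of the Taylor resolution T is a dg ideal of T, i.e., T·J ⊆ J and ∂(J) ⊆ J. -/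
/-!
Since `A₊` is upward closed, the span of the `e_V`, `V ∈ A₊`, is already an ideal: `e_W e_V` is a
multiple of `e_{W ∪ V}` and `W ∪ V ⊇ V`. For the other generators `∂ e_V` with `W`, `V` disjoint,
the Leibniz rule gives `± e_W ∂(e_V) = ∂(e_W e_V) - ∂(e_W) e_V`, a multiple of `∂ e_{W ∪ V}` minus
a combination of the `e_{(W ∖ w) ∪ V}`. If `W` meets `V`, a term `e_W e_{V ∖ v}` of `e_W ∂(e_V)`
survives only when `v ∈ W`, and then `W ∪ (V ∖ v) ⊇ V`. Closure under `∂` is `∂² = 0`.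
-/

open Finset

/-- An edge of the Taylor graph: `U → V` iff `V ⊆ U`, `|U| = |V| + 1`,
`m_U = m_V` and `|V| ≥ 2`. -/
def taylorStep {ι σ₀ : Type*} [LinearOrder ι] (u : ι → (σ₀ →₀ ℕ))
    (U V : Finset ι) : Prop :=
  V ⊆ U ∧ U.card = V.card + 1 ∧ U.sup u = V.sup u ∧ 2 ≤ V.card

theorem tsub_add_add_tsub {α : Type*} [AddCommSemigroup α] [PartialOrder α] [ExistsAddOfLE α]
    [AddLeftMono α] [Sub α] [OrderedSub α] [AddLeftReflectLE α] {a b c d : α} (hb : b ≤ a)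
    (hd : d ≤ b + c) : a - b + (b + c - d) = a + c - d := by
  rw [← add_tsub_assoc_of_le hd, ← add_assoc, tsub_add_cancel_of_le hb]

theorem Finset.subset_union_erase_of_not_disjoint {α : Type*} [DecidableEq α] {W V : Finset α}
    {v : α} (h : ¬Disjoint W V) (h' : Disjoint W (V.erase v)) : V ⊆ W ∪ V.erase v := by
  have hvW : v ∈ W := by
    by_contra hv
    exact h (disjoint_of_erase_right hv h')
  intro x hx
  by_cases hxv : x = v
  · exact mem_union_left _ (hxv ▸ hvW)
  · exact mem_union_right _ (mem_erase.mpr ⟨hxv, hx⟩)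

section Combinatorics

variable {ι : Type*} [LinearOrder ι]

theorem sigmaCount_eq_sum_right (W V : Finset ι) :
    sigmaCount W V = ∑ v ∈ V, #{w ∈ W | v < w} := by
  rw [sigmaCount, card_filter, sum_product, sum_comm]
  exact sum_congr rfl fun v _ => (card_filter _ _).symm

theorem sigmaCount_eq_sum_left (W V : Finset ι) :
    sigmaCount W V = ∑ w ∈ W, #{v ∈ V | v < w} := by
  rw [sigmaCount, card_filter, sum_product]
  exact sum_congr rfl fun w _ => (card_filter _ _).symm

theorem sigmaCount_erase_left {W : Finset ι} (V : Finset ι) {w : ι} (hw : w ∈ W) :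
    sigmaCount W V = sigmaCount (W.erase w) V + #{v ∈ V | v < w} := by
  rw [sigmaCount_eq_sum_left, sigmaCount_eq_sum_left, sum_erase_add _ _ hw]

theorem sigmaCount_erase_right (W : Finset ι) {V : Finset ι} {v : ι} (hv : v ∈ V) :
    sigmaCount W V = sigmaCount W (V.erase v) + #{w ∈ W | v < w} := by
  rw [sigmaCount_eq_sum_right, sigmaCount_eq_sum_right, sum_erase_add _ _ hv]

theorem card_filter_lt_add_card_filter_gt {W : Finset ι} {v : ι} (hv : v ∉ W) :
    #{w ∈ W | w < v} + #{w ∈ W | v < w} = #W := by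
  rw [← card_filter_add_card_filter_not (s := W) (· < v)]
  congr 2
  exact filter_congr fun w hw =>
    ⟨fun h => not_lt.mpr h.le,
      fun h => lt_of_le_of_ne (not_lt.mp h) (ne_of_mem_of_not_mem hw hv).symm⟩

theorem card_filter_lt_union {W V : Finset ι} (h : Disjoint W V) (x : ι) :
    #{y ∈ W ∪ V | y < x} = #{y ∈ W | y < x} + #{y ∈ V | y < x} := by
  rw [filter_union, card_union_of_disjoint (h.mono (filter_subset _ _) (filter_subset _ _))]

theorem card_filter_lt_erase_of_le (U : Finset ι) {v w : ι} (h : w ≤ v) :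
    #{x ∈ U.erase v | x < w} = #{x ∈ U | x < w} := by
  rw [filter_erase, erase_eq_of_notMem (by simp [h])]

theorem card_filter_lt_erase_add_one {U : Finset ι} {v w : ι} (hw : w ∈ U) (h : w < v) :
    #{x ∈ U.erase w | x < v} + 1 = #{x ∈ U | x < v} := by
  rw [filter_erase, card_erase_add_one (mem_filter.mpr ⟨hw, h⟩)]

theorem sum_sum_erase_eq_zero_of_antisymm {M : Type*} [AddCommGroup M] (s : Finset ι)
    (F : ι → ι → M) (h : ∀ v ∈ s, ∀ w ∈ s, w < v → F v w = -F w v) :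
    ∑ v ∈ s, ∑ w ∈ s.erase v, F v w = 0 := by
  have hsplit : ∀ v, ∑ w ∈ s.erase v, F v w
      = ∑ w ∈ s with w < v, F v w + ∑ w ∈ s with v < w, F v w := fun v => by
    rw [← sum_filter_add_sum_filter_not (s.erase v) (· < v)]
    congr 1
    · rw [filter_erase, erase_eq_of_notMem (by simp)]
    · refine sum_congr (ext fun x => ?_) fun _ _ => rfl
      simp only [mem_filter, mem_erase, not_lt]
      exact ⟨fun ⟨⟨hne, hx⟩, hle⟩ => ⟨hx, lt_of_le_of_ne hle hne.symm⟩,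
        fun ⟨hx, hlt⟩ => ⟨⟨hlt.ne', hx⟩, hlt.le⟩⟩
  have hswap : ∑ v ∈ s, ∑ w ∈ s with v < w, F v w = ∑ v ∈ s, ∑ w ∈ s with w < v, F w v :=
    sum_comm' fun v w => by simp only [mem_filter]; tauto
  simp_rw [hsplit, sum_add_distrib, hswap, ← sum_add_distrib]
  exact sum_eq_zero fun v hv => sum_eq_zero fun w hw => by
    rw [h v hv w (mem_filter.mp hw).1 (mem_filter.mp hw).2, neg_add_cancel]

end Combinatorics

section Monomials

variable (k : Type*) [Field k] {σ₀ : Type*}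

noncomputable def signedMonomial (n : ℕ) (s : σ₀ →₀ ℕ) : MvPolynomial σ₀ k :=
  (-1) ^ n * MvPolynomial.monomial s 1

variable {k}

theorem signedMonomial_mul (a b : ℕ) (s t : σ₀ →₀ ℕ) :
    signedMonomial k a s * signedMonomial k b t = signedMonomial k (a + b) (s + t) := by
  have hmon : MvPolynomial.monomial (s + t) (1 : k) =
      MvPolynomial.monomial s 1 * MvPolynomial.monomial t 1 := by
    rw [MvPolynomial.monomial_mul, mul_one]
  rw [signedMonomial, signedMonomial, signedMonomial, pow_add, hmon]
  ring

theorem signedMonomial_succ (n : ℕ) (s : σ₀ →₀ ℕ) :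
    signedMonomial k (n + 1) s = -signedMonomial k n s := by
  rw [signedMonomial, signedMonomial, pow_succ, mul_neg_one, neg_mul]

theorem signedMonomial_add_two_mul (a n : ℕ) (s : σ₀ →₀ ℕ) :
    signedMonomial k (a + 2 * n) s = signedMonomial k a s := by
  simp only [signedMonomial, pow_add, pow_mul, neg_one_sq, one_pow, mul_one]

theorem neg_one_pow_mul_signedMonomial (a b : ℕ) (s : σ₀ →₀ ℕ) :
    (-1) ^ a * signedMonomial k b s = signedMonomial k (a + b) s := by
  rw [signedMonomial, signedMonomial, pow_add, mul_assoc]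

theorem sup_union_le_add {ι : Type*} [DecidableEq ι] (u : ι → σ₀ →₀ ℕ) (X Y : Finset ι) :
    (X ∪ Y).sup u ≤ X.sup u + Y.sup u := by
  rw [sup_union]
  exact sup_le le_self_add le_add_self

end Monomials

section TaylorComplex

variable (k : Type*) [Field k] {ι σ₀ : Type*} [LinearOrder ι] (u : ι → σ₀ →₀ ℕ)

noncomputable def taylorDTerm (U : Finset ι) (v : ι) : Finset ι →₀ MvPolynomial σ₀ k :=
  Finsupp.single (U.erase v) (signedMonomial k #{w ∈ U | w < v} (U.sup u - (U.erase v).sup u))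

theorem taylorD_eq_sum_taylorDTerm (U : Finset ι) :
    taylorD k u U = ∑ v ∈ U, taylorDTerm k u U v := by
  simp only [taylorD, taylorDTerm, signedMonomial, Finsupp.smul_single']

noncomputable def taylorMulCoeff (W V : Finset ι) : MvPolynomial σ₀ k :=
  signedMonomial k (sigmaCount W V) (W.sup u + V.sup u - (W ∪ V).sup u)

theorem taylorMul_of_disjoint {W V : Finset ι} (h : Disjoint W V) :
    taylorMul k u W V = Finsupp.single (W ∪ V) (taylorMulCoeff k u W V) := by
  rw [taylorMul, if_pos h, taylorMulCoeff, signedMonomial]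

theorem taylorMul_of_not_disjoint {W V : Finset ι} (h : ¬Disjoint W V) :
    taylorMul k u W V = 0 := by
  rw [taylorMul, if_neg h]

theorem taylorDiff_eq_linearCombination :
    taylorDiff k u = Finsupp.linearCombination (MvPolynomial σ₀ k) (taylorD k u) := by
  ext1 x
  exact (Finsupp.linearCombination_apply _ x).symm

theorem taylorDiff_single (U : Finset ι) (c : MvPolynomial σ₀ k) :
    taylorDiff k u (Finsupp.single U c) = c • taylorD k u U := by
  rw [taylorDiff_eq_linearCombination, Finsupp.linearCombination_single]

noncomputable def taylorProdBilin :
    (Finset ι →₀ MvPolynomial σ₀ k) →ₗ[MvPolynomial σ₀ k]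
      (Finset ι →₀ MvPolynomial σ₀ k) →ₗ[MvPolynomial σ₀ k] (Finset ι →₀ MvPolynomial σ₀ k) :=
  Finsupp.linearCombination _ fun V => Finsupp.linearCombination _ (taylorMul k u V)

theorem taylorProdBilin_apply (x y : Finset ι →₀ MvPolynomial σ₀ k) :
    taylorProdBilin k u x y = taylorProd k u x y := by
  simp only [taylorProdBilin, taylorProd, Finsupp.linearCombination_apply,
    LinearMap.finsupp_sum_apply, LinearMap.smul_apply, Finsupp.smul_sum, smul_smul]

theorem taylorProdBilin_single_single (V W : Finset ι) (a b : MvPolynomial σ₀ k) :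
    taylorProdBilin k u (Finsupp.single V a) (Finsupp.single W b) =
      (a * b) • taylorMul k u V W := by
  simp only [taylorProdBilin, Finsupp.linearCombination_single, LinearMap.smul_apply, smul_smul,
    mul_comm a b]

theorem taylorDiff_taylorD (U : Finset ι) : taylorDiff k u (taylorD k u U) = 0 := by
  set F : ι → ι → Finset ι →₀ MvPolynomial σ₀ k := fun v w =>
    Finsupp.single ((U.erase v).erase w) (signedMonomial k
      (#{x ∈ U | x < v} + #{x ∈ U.erase v | x < w}) (U.sup u - ((U.erase v).erase w).sup u))
  have expand : taylorDiff k u (taylorD k u U) = ∑ v ∈ U, ∑ w ∈ U.erase v, F v w := by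
    rw [taylorD_eq_sum_taylorDTerm, taylorDiff_eq_linearCombination, map_sum]
    refine sum_congr rfl fun v _ => ?_
    rw [taylorDTerm, Finsupp.linearCombination_single, taylorD_eq_sum_taylorDTerm, smul_sum]
    refine sum_congr rfl fun w _ => ?_
    rw [taylorDTerm, Finsupp.smul_single', signedMonomial_mul, tsub_add_tsub_cancel
      (sup_mono (erase_subset _ _)) (sup_mono (erase_subset _ _))]
  have antisymm : ∀ v ∈ U, ∀ w ∈ U, w < v → F v w = -F w v := fun v _ w hw hwv => by
    simp only [F]
    rw [← Finsupp.single_neg, ← signedMonomial_succ, erase_right_comm (a := v),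
      card_filter_lt_erase_of_le U hwv.le, ← card_filter_lt_erase_add_one hw hwv]
    congr 2
    ring
  rw [expand]
  exact sum_sum_erase_eq_zero_of_antisymm U F antisymm

theorem taylorProdBilin_taylorDTerm_single {W V : Finset ι} (h : Disjoint W V) {w : ι}
    (hw : w ∈ W) :
    taylorProdBilin k u (taylorDTerm k u W w) (Finsupp.single V 1) =
      taylorMulCoeff k u W V • taylorDTerm k u (W ∪ V) w := by
  have hwV : w ∉ V := disjoint_left.mp h hw
  rw [taylorDTerm, taylorDTerm, taylorMulCoeff, taylorProdBilin_single_single, mul_one,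
    taylorMul_of_disjoint k u (h.mono_left (erase_subset _ _)), taylorMulCoeff,
    Finsupp.smul_single', Finsupp.smul_single', signedMonomial_mul, signedMonomial_mul,
    tsub_add_add_tsub (sup_mono (erase_subset _ _)) (sup_union_le_add u _ _),
    tsub_add_tsub_cancel (sup_union_le_add u _ _) (sup_mono (erase_subset _ _)),
    erase_union_distrib, erase_eq_of_notMem hwV]
  have hsign : sigmaCount W V + #{x ∈ W ∪ V | x < w}
      = #{x ∈ W | x < w} + sigmaCount (W.erase w) V + 2 * #{x ∈ V | x < w} := by
    rw [sigmaCount_erase_left V hw, card_filter_lt_union h]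
    ring
  rw [hsign, signedMonomial_add_two_mul]

theorem neg_one_pow_smul_taylorProdBilin_single_taylorDTerm {W V : Finset ι} (h : Disjoint W V)
    {v : ι} (hv : v ∈ V) :
    (-1 : MvPolynomial σ₀ k) ^ #W • taylorProdBilin k u (Finsupp.single W 1) (taylorDTerm k u V v) =
      taylorMulCoeff k u W V • taylorDTerm k u (W ∪ V) v := by
  have hvW : v ∉ W := disjoint_right.mp h hv
  have hexp : V.sup u - (V.erase v).sup u + (W.sup u + (V.erase v).sup u - (W ∪ V.erase v).sup u)
      = W.sup u + V.sup u - (W ∪ V.erase v).sup u := by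
    rw [add_comm (W.sup u), tsub_add_add_tsub (sup_mono (erase_subset _ _))
      (by rw [add_comm]; exact sup_union_le_add u _ _), add_comm]
  rw [taylorDTerm, taylorDTerm, taylorMulCoeff, taylorProdBilin_single_single, one_mul,
    taylorMul_of_disjoint k u (h.mono_right (erase_subset _ _)), taylorMulCoeff,
    Finsupp.smul_single', Finsupp.smul_single', Finsupp.smul_single', signedMonomial_mul,
    signedMonomial_mul, neg_one_pow_mul_signedMonomial, hexp,
    tsub_add_tsub_cancel (sup_union_le_add u _ _) (sup_mono (erase_subset _ _)),
    erase_union_distrib, erase_eq_of_notMem hvW]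
  have hsign : sigmaCount W V + #{x ∈ W ∪ V | x < v}
      = #W + (#{x ∈ V | x < v} + sigmaCount W (V.erase v)) := by
    rw [sigmaCount_erase_right W hv, card_filter_lt_union h,
      ← card_filter_lt_add_card_filter_gt hvW]
    ring
  rw [hsign]

theorem taylorDiff_taylorMul {W V : Finset ι} (h : Disjoint W V) :
    taylorDiff k u (taylorMul k u W V) =
      taylorProdBilin k u (taylorD k u W) (Finsupp.single V 1) +
        (-1 : MvPolynomial σ₀ k) ^ #W •
          taylorProdBilin k u (Finsupp.single W 1) (taylorD k u V) := by
  rw [taylorMul_of_disjoint k u h, taylorDiff_single, taylorD_eq_sum_taylorDTerm, smul_sum,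
    sum_union h, taylorD_eq_sum_taylorDTerm, taylorD_eq_sum_taylorDTerm, map_sum,
    LinearMap.sum_apply, map_sum, smul_sum]
  congr 1
  · exact sum_congr rfl fun w hw => (taylorProdBilin_taylorDTerm_single k u h hw).symm
  · exact sum_congr rfl fun v hv =>
      (neg_one_pow_smul_taylorProdBilin_single_taylorDTerm k u h hv).symm

end TaylorComplex

section InducedSubcomplex

variable (k : Type*) [Field k] {ι σ₀ : Type*} [LinearOrder ι] (u : ι → σ₀ →₀ ℕ)

noncomputable def inducedSubcomplex (S : Set (Finset ι)) :
    Submodule (MvPolynomial σ₀ k) (Finset ι →₀ MvPolynomial σ₀ k) :=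
  Submodule.span _ ((fun U => Finsupp.single U 1) '' S ∪ taylorD k u '' S)

variable {k u} {S : Set (Finset ι)}

theorem single_mem_inducedSubcomplex {U : Finset ι} (hU : U ∈ S) (c : MvPolynomial σ₀ k) :
    Finsupp.single U c ∈ inducedSubcomplex k u S := by
  rw [← Finsupp.smul_single_one]
  exact Submodule.smul_mem _ c (Submodule.subset_span (Or.inl ⟨U, hU, rfl⟩))

theorem taylorD_mem_inducedSubcomplex {U : Finset ι} (hU : U ∈ S) :
    taylorD k u U ∈ inducedSubcomplex k u S :=
  Submodule.subset_span (Or.inr ⟨U, hU, rfl⟩)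

theorem taylorMul_mem_inducedSubcomplex {X Y : Finset ι} (h : Disjoint X Y → X ∪ Y ∈ S) :
    taylorMul k u X Y ∈ inducedSubcomplex k u S := by
  by_cases hXY : Disjoint X Y
  · rw [taylorMul_of_disjoint k u hXY]
    exact single_mem_inducedSubcomplex (h hXY) _
  · rw [taylorMul_of_not_disjoint k u hXY]
    exact Submodule.zero_mem _

theorem taylorDiff_mem_inducedSubcomplex {x : Finset ι →₀ MvPolynomial σ₀ k}
    (hx : x ∈ inducedSubcomplex k u S) : taylorDiff k u x ∈ inducedSubcomplex k u S := by
  rw [taylorDiff_eq_linearCombination]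
  refine (Submodule.map_span_le _ _ _).mpr ?_ ⟨x, hx, rfl⟩
  rintro _ (⟨U, hU, rfl⟩ | ⟨U, hU, rfl⟩)
  · rw [Finsupp.linearCombination_single, one_smul]
    exact taylorD_mem_inducedSubcomplex hU
  · rw [← taylorDiff_eq_linearCombination, taylorDiff_taylorD]
    exact Submodule.zero_mem _

theorem map_taylorD_mem {M : Type*} [AddCommMonoid M] [Module (MvPolynomial σ₀ k) M]
    (f : (Finset ι →₀ MvPolynomial σ₀ k) →ₗ[MvPolynomial σ₀ k] M)
    {N : Submodule (MvPolynomial σ₀ k) M}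
    {U : Finset ι} (h : ∀ v ∈ U, f (Finsupp.single (U.erase v) 1) ∈ N) :
    f (taylorD k u U) ∈ N := by
  rw [taylorD_eq_sum_taylorDTerm, map_sum]
  refine Submodule.sum_mem _ fun v hv => ?_
  rw [taylorDTerm, ← Finsupp.smul_single_one, map_smul]
  exact Submodule.smul_mem _ _ (h v hv)

variable (hS : IsUpperSet S)
include hS

theorem taylorProdBilin_single_taylorD_mem (W : Finset ι) {V : Finset ι} (hV : V ∈ S) :
    taylorProdBilin k u (Finsupp.single W 1) (taylorD k u V) ∈ inducedSubcomplex k u S := by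
  by_cases h : Disjoint W V
  · have hleibniz := taylorDiff_taylorMul k u h
    have hprod : taylorDiff k u (taylorMul k u W V) ∈ inducedSubcomplex k u S :=
      taylorDiff_mem_inducedSubcomplex
        (taylorMul_mem_inducedSubcomplex fun _ => hS subset_union_right hV)
    have hdiff_left : taylorProdBilin k u (taylorD k u W) (Finsupp.single V 1)
        ∈ inducedSubcomplex k u S :=
      map_taylorD_mem ((taylorProdBilin k u).flip _) fun w _ => by
        rw [LinearMap.flip_apply, taylorProdBilin_single_single, one_mul, one_smul]
        exact taylorMul_mem_inducedSubcomplex fun _ => hS subset_union_right hV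
    rw [← Submodule.smul_mem_iff_of_isUnit _ ((isUnit_neg_one).pow #W),
      eq_sub_of_add_eq' hleibniz.symm]
    exact Submodule.sub_mem _ hprod hdiff_left
  · refine map_taylorD_mem _ fun v _ => ?_
    rw [taylorProdBilin_single_single, one_mul, one_smul]
    exact taylorMul_mem_inducedSubcomplex fun h' =>
      hS (subset_union_erase_of_not_disjoint h h') hV

theorem taylorProdBilin_taylorD_single_mem {V : Finset ι} (hV : V ∈ S) (W : Finset ι) :
    taylorProdBilin k u (taylorD k u V) (Finsupp.single W 1) ∈ inducedSubcomplex k u S := by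
  by_cases h : Disjoint V W
  · have hleibniz := taylorDiff_taylorMul k u h
    have hprod : taylorDiff k u (taylorMul k u V W) ∈ inducedSubcomplex k u S :=
      taylorDiff_mem_inducedSubcomplex
        (taylorMul_mem_inducedSubcomplex fun _ => hS subset_union_left hV)
    have hdiff_right : (-1 : MvPolynomial σ₀ k) ^ #V •
        taylorProdBilin k u (Finsupp.single V 1) (taylorD k u W) ∈ inducedSubcomplex k u S :=
      Submodule.smul_mem _ _ <| map_taylorD_mem _ fun w _ => by
        rw [taylorProdBilin_single_single, one_mul, one_smul]
        exact taylorMul_mem_inducedSubcomplex fun _ => hS subset_union_left hV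
    rw [eq_sub_of_add_eq hleibniz.symm]
    exact Submodule.sub_mem _ hprod hdiff_right
  · refine map_taylorD_mem ((taylorProdBilin k u).flip _) fun v _ => ?_
    rw [LinearMap.flip_apply, taylorProdBilin_single_single, one_mul, one_smul]
    refine taylorMul_mem_inducedSubcomplex fun h' => hS ?_ hV
    rw [union_comm]
    exact subset_union_erase_of_not_disjoint (fun hWV => h hWV.symm) h'.symm

theorem taylorProdBilin_mem_inducedSubcomplex_right (x : Finset ι →₀ MvPolynomial σ₀ k)
    {y : Finset ι →₀ MvPolynomial σ₀ k} (hy : y ∈ inducedSubcomplex k u S) :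
    taylorProdBilin k u x y ∈ inducedSubcomplex k u S := by
  induction x using Finsupp.induction_linear with
  | zero =>
    rw [map_zero, LinearMap.zero_apply]
    exact Submodule.zero_mem _
  | add x x' hx hx' =>
    rw [map_add, LinearMap.add_apply]
    exact Submodule.add_mem _ hx hx'
  | single W c =>
    rw [← Finsupp.smul_single_one, map_smul, LinearMap.smul_apply]
    refine Submodule.smul_mem _ c ((Submodule.map_span_le _ _ _).mpr ?_ ⟨y, hy, rfl⟩)
    rintro _ (⟨V, hV, rfl⟩ | ⟨V, hV, rfl⟩)
    · rw [taylorProdBilin_single_single, one_mul, one_smul]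
      exact taylorMul_mem_inducedSubcomplex fun _ => hS subset_union_right hV
    · exact taylorProdBilin_single_taylorD_mem hS W hV

theorem taylorProdBilin_mem_inducedSubcomplex_left {y : Finset ι →₀ MvPolynomial σ₀ k}
    (hy : y ∈ inducedSubcomplex k u S) (x : Finset ι →₀ MvPolynomial σ₀ k) :
    taylorProdBilin k u y x ∈ inducedSubcomplex k u S := by
  induction x using Finsupp.induction_linear with
  | zero =>
    rw [map_zero]
    exact Submodule.zero_mem _
  | add x x' hx hx' =>
    rw [map_add]
    exact Submodule.add_mem _ hx hx'
  | single W c =>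
    rw [← Finsupp.smul_single_one, map_smul, ← LinearMap.flip_apply]
    refine Submodule.smul_mem _ c ((Submodule.map_span_le _ _ _).mpr ?_ ⟨y, hy, rfl⟩)
    rintro _ (⟨V, hV, rfl⟩ | ⟨V, hV, rfl⟩)
    · rw [LinearMap.flip_apply, taylorProdBilin_single_single, one_mul, one_smul]
      exact taylorMul_mem_inducedSubcomplex fun _ => hS subset_union_left hV
    · exact taylorProdBilin_taylorD_single_mem hS hV W

end InducedSubcomplex

theorem stmt12_general (k : Type*) [Field k] {ι σ₀ : Type*} [LinearOrder ι]
    (u : ι → (σ₀ →₀ ℕ))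
    (Aplus : Set (Finset ι))
    (hsup : ∀ U ∈ Aplus, ∀ W : Finset ι, U ⊆ W → W ∈ Aplus)
    (Jc : Submodule (MvPolynomial σ₀ k) (Finset ι →₀ MvPolynomial σ₀ k))
    (hJc : Jc = Submodule.span (MvPolynomial σ₀ k)
      (((fun U => Finsupp.single U (1 : MvPolynomial σ₀ k)) '' Aplus) ∪
        ((taylorD k u) '' Aplus))) :
    (∀ x ∈ Jc, taylorDiff k u x ∈ Jc) ∧
    (∀ x y : Finset ι →₀ MvPolynomial σ₀ k, y ∈ Jc →
      taylorProd k u x y ∈ Jc ∧ taylorProd k u y x ∈ Jc) := by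
  have hS : IsUpperSet Aplus := fun U W hUW hU => hsup U hU W hUW
  have hJ : Jc = inducedSubcomplex k u Aplus := hJc
  subst hJ
  refine ⟨fun x hx => taylorDiff_mem_inducedSubcomplex hx, fun x y hy => ?_⟩
  rw [← taylorProdBilin_apply, ← taylorProdBilin_apply]
  exact ⟨taylorProdBilin_mem_inducedSubcomplex_right hS x hy,
    taylorProdBilin_mem_inducedSubcomplex_left hS hy x⟩

/-- if `A` is a Morse matching on the Taylor graph of a monomial ideal
(a set of edges, no two incident, whose reversal leaves the graph acyclic) whose set of
sources `A₊` is closed under taking supersets, then the induced subcomplex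
`J = span { e_V, ∂(e_V) : V ∈ A₊ }` is a dg ideal of the Taylor resolution:
`∂(J) ⊆ J` and `T·J ⊆ J`. -/
theorem stmt12 (k : Type*) [Field k] {ι σ₀ : Type*} [LinearOrder ι] [Fintype ι]
    (u : ι → (σ₀ →₀ ℕ)) (hu : Function.Injective u)
    (A : Set (Finset ι × Finset ι))
    (hA : ∀ p ∈ A, taylorStep u p.1 p.2)
    (hinc : ∀ p ∈ A, ∀ q ∈ A, p ≠ q →
      p.1 ≠ q.1 ∧ p.1 ≠ q.2 ∧ p.2 ≠ q.1 ∧ p.2 ≠ q.2)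
    (hacyclic : ∀ U : Finset ι,
      ¬ Relation.TransGen
        (fun U V => (taylorStep u U V ∧ (U, V) ∉ A) ∨ (V, U) ∈ A) U U)
    (Aplus : Set (Finset ι)) (hAplus : Aplus = {U | ∃ V, (U, V) ∈ A})
    (hsup : ∀ U ∈ Aplus, ∀ W : Finset ι, U ⊆ W → W ∈ Aplus)
    (Jc : Submodule (MvPolynomial σ₀ k) (Finset ι →₀ MvPolynomial σ₀ k))
    (hJc : Jc = Submodule.span (MvPolynomial σ₀ k)
      (((fun U => Finsupp.single U (1 : MvPolynomial σ₀ k)) '' Aplus) ∪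
        ((taylorD k u) '' Aplus))) :
    (∀ x ∈ Jc, taylorDiff k u x ∈ Jc) ∧
    (∀ x y : Finset ι →₀ MvPolynomial σ₀ k, y ∈ Jc →
      taylorProd k u x y ∈ Jc ∧ taylorProd k u y x ∈ Jc) :=
  stmt12_general k u Aplus hsup Jc hJc
end
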